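/- arXiv:1002.3494 — 5 statements merged into one kernel-verified Lean document; each statement's English description precedes it below -/
import Mathlib

section
/- Let ξ be a primitive 5th root of unity in ℂ and let q₀(x₁,x₂,x₃,x₄) = x₁⁵+x₂⁵+x₃⁵+x₄⁵ + b₁x₂x₃³x₄ + b₂x₁³x₃x₄ + b₃x₁x₂x₄³ + b₄x₁x₂³x₃ + c₁x₂²x₃x₄² + c₂x₁x₃²x₄² + c₃x₁²x₂²x₄ + c₄x₁²x₂x₃². Then the linear substitution x_s ↦ ξ^{i_s}·x_s (with i₁ = 0) maps q₀ to itself if and only if for every nonzero coefficient among the b's and c's the corresponding exponent condition holds; in particular if all b_s and c_s are nonzero, this holds if and only if i₂ is arbitrary, i₃ = 2i₂ and i₄ = 3i₂ in Z/5. -/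
set_option maxHeartbeats 1000000
set_option maxRecDepth 100000

open MvPolynomial Finsupp

/-- Let `ξ` be a primitive 5th root of unity and `q₀` the generic torsion-5 Godeaux
quintic (variables `X 0, X 1, X 2, X 3` standing for `x₁, x₂, x₃, x₄`).  If all the
coefficients `b₁,…,b₄, c₁,…,c₄` are nonzero, then the substitution `x_s ↦ ξ^{i_s} x_s`
(with `i₁ = 0`) maps `q₀` to itself iff `i₃ = 2·i₂` and `i₄ = 3·i₂` in `ZMod 5`
(`i₂` arbitrary). -/
theorem stmt_2 (ξ : ℂ) (hξ : IsPrimitiveRoot ξ 5)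
    (b₁ b₂ b₃ b₄ c₁ c₂ c₃ c₄ : ℂ)
    (hb₁ : b₁ ≠ 0) (hb₂ : b₂ ≠ 0) (hb₃ : b₃ ≠ 0) (hb₄ : b₄ ≠ 0)
    (hc₁ : c₁ ≠ 0) (hc₂ : c₂ ≠ 0) (hc₃ : c₃ ≠ 0) (hc₄ : c₄ ≠ 0)
    (i : Fin 4 → ZMod 5) (hi₁ : i 0 = 0)
    (q₀ : MvPolynomial (Fin 4) ℂ)
    (hq₀ : q₀ = X 0 ^ 5 + X 1 ^ 5 + X 2 ^ 5 + X 3 ^ 5 +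
      C b₁ * (X 1 * X 2 ^ 3 * X 3) + C b₂ * (X 0 ^ 3 * X 2 * X 3) +
      C b₃ * (X 0 * X 1 * X 3 ^ 3) + C b₄ * (X 0 * X 1 ^ 3 * X 2) +
      C c₁ * (X 1 ^ 2 * X 2 * X 3 ^ 2) + C c₂ * (X 0 * X 2 ^ 2 * X 3 ^ 2) +
      C c₃ * (X 0 ^ 2 * X 1 ^ 2 * X 3) + C c₄ * (X 0 ^ 2 * X 1 * X 2 ^ 2)) :
    (aeval (fun s : Fin 4 => C (ξ ^ (i s).val) * X s) q₀ = q₀)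
      ↔ (i 2 = 2 * i 1 ∧ i 3 = 3 * i 1) := by
  constructor
  · intro h
    have M1 : (X 0 ^ 5 : MvPolynomial (Fin 4) ℂ) = monomial (single 0 5) 1 := by
      simp [X_pow_eq_monomial]
    have M2 : (X 1 ^ 5 : MvPolynomial (Fin 4) ℂ) = monomial (single 1 5) 1 := by
      simp [X_pow_eq_monomial]
    have M3 : (X 2 ^ 5 : MvPolynomial (Fin 4) ℂ) = monomial (single 2 5) 1 := by
      simp [X_pow_eq_monomial]
    have M4 : (X 3 ^ 5 : MvPolynomial (Fin 4) ℂ) = monomial (single 3 5) 1 := by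
      simp [X_pow_eq_monomial]
    have Mb1 : (X 1 * X 2 ^ 3 * X 3 : MvPolynomial (Fin 4) ℂ)
        = monomial (single 1 1 + single 2 3 + single 3 1) 1 := by
      simp [X_pow_eq_monomial, monomial_mul, monomial_pow, X]
    have Mb2 : (X 0 ^ 3 * X 2 * X 3 : MvPolynomial (Fin 4) ℂ)
        = monomial (single 0 3 + single 2 1 + single 3 1) 1 := by
      simp [X_pow_eq_monomial, monomial_mul, monomial_pow, X]
    have Mb3 : (X 0 * X 1 * X 3 ^ 3 : MvPolynomial (Fin 4) ℂ)
        = monomial (single 0 1 + single 1 1 + single 3 3) 1 := by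
      simp [X_pow_eq_monomial, monomial_mul, monomial_pow, X]
    have Mb4 : (X 0 * X 1 ^ 3 * X 2 : MvPolynomial (Fin 4) ℂ)
        = monomial (single 0 1 + single 1 3 + single 2 1) 1 := by
      simp [X_pow_eq_monomial, monomial_mul, monomial_pow, X]
    have Mc1 : (X 1 ^ 2 * X 2 * X 3 ^ 2 : MvPolynomial (Fin 4) ℂ)
        = monomial (single 1 2 + single 2 1 + single 3 2) 1 := by
      simp [X_pow_eq_monomial, monomial_mul, monomial_pow, X]
    have Mc2 : (X 0 * X 2 ^ 2 * X 3 ^ 2 : MvPolynomial (Fin 4) ℂ)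
        = monomial (single 0 1 + single 2 2 + single 3 2) 1 := by
      simp [X_pow_eq_monomial, monomial_mul, monomial_pow, X]
    have Mc3 : (X 0 ^ 2 * X 1 ^ 2 * X 3 : MvPolynomial (Fin 4) ℂ)
        = monomial (single 0 2 + single 1 2 + single 3 1) 1 := by
      simp [X_pow_eq_monomial, monomial_mul, monomial_pow, X]
    have Mc4 : (X 0 ^ 2 * X 1 * X 2 ^ 2 : MvPolynomial (Fin 4) ℂ)
        = monomial (single 0 2 + single 1 1 + single 2 2) 1 := by
      simp [X_pow_eq_monomial, monomial_mul, monomial_pow, X]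
    rw [hq₀] at h
    simp only [map_add, map_mul, map_pow, aeval_X, aeval_C, algebraMap_eq, mul_pow,
      hi₁, ZMod.val_zero, pow_zero, one_pow, one_mul] at h
    have hA := congrArg (coeff (single 0 1 + single 1 1 + single 3 3)) h
    have hB := congrArg (coeff (single 0 1 + single 1 3 + single 2 1)) h
    have nA1 : (single 0 5 : Fin 4 →₀ ℕ) ≠ single 0 1 + single 1 1 + single 3 3 :=
      fun hh => by simpa using DFunLike.congr_fun hh 0
    have nA2 : (single 1 5 : Fin 4 →₀ ℕ) ≠ single 0 1 + single 1 1 + single 3 3 :=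
      fun hh => by simpa using DFunLike.congr_fun hh 0
    have nA3 : (single 2 5 : Fin 4 →₀ ℕ) ≠ single 0 1 + single 1 1 + single 3 3 :=
      fun hh => by simpa using DFunLike.congr_fun hh 0
    have nA4 : (single 3 5 : Fin 4 →₀ ℕ) ≠ single 0 1 + single 1 1 + single 3 3 :=
      fun hh => by simpa using DFunLike.congr_fun hh 0
    have nAb1 : (single 1 1 + single 2 3 + single 3 1 : Fin 4 →₀ ℕ) ≠ single 0 1 + single 1 1 + single 3 3 :=
      fun hh => by simpa using DFunLike.congr_fun hh 0
    have nAb2 : (single 0 3 + single 2 1 + single 3 1 : Fin 4 →₀ ℕ) ≠ single 0 1 + single 1 1 + single 3 3 :=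
      fun hh => by simpa using DFunLike.congr_fun hh 0
    have nAb4 : (single 0 1 + single 1 3 + single 2 1 : Fin 4 →₀ ℕ) ≠ single 0 1 + single 1 1 + single 3 3 :=
      fun hh => by simpa using DFunLike.congr_fun hh 1
    have nAc1 : (single 1 2 + single 2 1 + single 3 2 : Fin 4 →₀ ℕ) ≠ single 0 1 + single 1 1 + single 3 3 :=
      fun hh => by simpa using DFunLike.congr_fun hh 0
    have nAc2 : (single 0 1 + single 2 2 + single 3 2 : Fin 4 →₀ ℕ) ≠ single 0 1 + single 1 1 + single 3 3 :=
      fun hh => by simpa using DFunLike.congr_fun hh 1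
    have nAc3 : (single 0 2 + single 1 2 + single 3 1 : Fin 4 →₀ ℕ) ≠ single 0 1 + single 1 1 + single 3 3 :=
      fun hh => by simpa using DFunLike.congr_fun hh 0
    have nAc4 : (single 0 2 + single 1 1 + single 2 2 : Fin 4 →₀ ℕ) ≠ single 0 1 + single 1 1 + single 3 3 :=
      fun hh => by simpa using DFunLike.congr_fun hh 0
    have nBb3 : (single 0 1 + single 1 1 + single 3 3 : Fin 4 →₀ ℕ) ≠ single 0 1 + single 1 3 + single 2 1 :=
      fun hh => by simpa using DFunLike.congr_fun hh 1
    have nB1 : (single 0 5 : Fin 4 →₀ ℕ) ≠ single 0 1 + single 1 3 + single 2 1 :=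
      fun hh => by simpa using DFunLike.congr_fun hh 0
    have nB2 : (single 1 5 : Fin 4 →₀ ℕ) ≠ single 0 1 + single 1 3 + single 2 1 :=
      fun hh => by simpa using DFunLike.congr_fun hh 0
    have nB3 : (single 2 5 : Fin 4 →₀ ℕ) ≠ single 0 1 + single 1 3 + single 2 1 :=
      fun hh => by simpa using DFunLike.congr_fun hh 0
    have nB4 : (single 3 5 : Fin 4 →₀ ℕ) ≠ single 0 1 + single 1 3 + single 2 1 :=
      fun hh => by simpa using DFunLike.congr_fun hh 0
    have nBb1 : (single 1 1 + single 2 3 + single 3 1 : Fin 4 →₀ ℕ) ≠ single 0 1 + single 1 3 + single 2 1 :=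
      fun hh => by simpa using DFunLike.congr_fun hh 0
    have nBb2 : (single 0 3 + single 2 1 + single 3 1 : Fin 4 →₀ ℕ) ≠ single 0 1 + single 1 3 + single 2 1 :=
      fun hh => by simpa using DFunLike.congr_fun hh 0
    have nBc1 : (single 1 2 + single 2 1 + single 3 2 : Fin 4 →₀ ℕ) ≠ single 0 1 + single 1 3 + single 2 1 :=
      fun hh => by simpa using DFunLike.congr_fun hh 0
    have nBc2 : (single 0 1 + single 2 2 + single 3 2 : Fin 4 →₀ ℕ) ≠ single 0 1 + single 1 3 + single 2 1 :=
      fun hh => by simpa using DFunLike.congr_fun hh 1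
    have nBc3 : (single 0 2 + single 1 2 + single 3 1 : Fin 4 →₀ ℕ) ≠ single 0 1 + single 1 3 + single 2 1 :=
      fun hh => by simpa using DFunLike.congr_fun hh 0
    have nBc4 : (single 0 2 + single 1 1 + single 2 2 : Fin 4 →₀ ℕ) ≠ single 0 1 + single 1 3 + single 2 1 :=
      fun hh => by simpa using DFunLike.congr_fun hh 0
    simp only [X, ← C_pow, monomial_pow, monomial_mul, C_mul_monomial, Finsupp.smul_single,
      smul_eq_mul, mul_one, one_pow, one_mul, zero_add, add_zero,
      coeff_add, coeff_monomial,
      nA1, nA2, nA3, nA4, nAb1, nAb2, nAb4, nAc1, nAc2, nAc3, nAc4,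
      nBb3, nB1, nB2, nB3, nB4, nBb1, nBb2, nBc1, nBc2, nBc3, nBc4,
      eq_self_iff_true, if_true, if_false, ite_true, ite_false,
      mul_zero, zero_mul] at hA hB
    have key : ∀ n : ℕ, ξ ^ n = 1 ↔ (n : ZMod 5) = 0 := fun n => by
      rw [hξ.pow_eq_one_iff_dvd, ZMod.natCast_eq_zero_iff]
    have hv : ∀ s, (((i s).val : ℕ) : ZMod 5) = i s := fun s => ZMod.natCast_rightInverse _
    have h5 : (5 : ZMod 5) = 0 := by decide
    have uA : ξ ^ (i 1).val * (ξ ^ (i 3).val) ^ 3 = 1 :=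
      mul_left_cancel₀ hb₃ (hA.trans (mul_one b₃).symm)
    have uB : (ξ ^ (i 1).val) ^ 3 * ξ ^ (i 2).val = 1 :=
      mul_left_cancel₀ hb₄ (hB.trans (mul_one b₄).symm)
    have hz : i 1 + i 3 * 3 = 0 := by
      have h' : ξ ^ ((i 1).val + (i 3).val * 3) = 1 := by rw [pow_add, pow_mul]; exact uA
      have := (key _).mp h'
      push_cast at this
      rwa [hv, hv] at this
    have hw : i 1 * 3 + i 2 = 0 := by
      have h' : ξ ^ ((i 1).val * 3 + (i 2).val) = 1 := by rw [pow_add, pow_mul]; exact uB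
      have := (key _).mp h'
      push_cast at this
      rwa [hv, hv] at this
    constructor
    · linear_combination hw - i 1 * h5
    · linear_combination 2 * hz - (i 1 + i 3) * h5
  · rintro ⟨h2c, h3c⟩
    have key : ∀ n : ℕ, ξ ^ n = 1 ↔ (n : ZMod 5) = 0 := fun n => by
      rw [hξ.pow_eq_one_iff_dvd, ZMod.natCast_eq_zero_iff]
    have hv : ∀ s, (((i s).val : ℕ) : ZMod 5) = i s := fun s => ZMod.natCast_rightInverse _
    have h5 : (5 : ZMod 5) = 0 := by decide
    have mk : ∀ n : ℕ, (n : ZMod 5) = 0 → (C ξ : MvPolynomial (Fin 4) ℂ) ^ n = 1 := by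
      intro n hn
      rw [← C_pow, (key n).mpr hn, C_1]
    have H1 : ((C ξ : MvPolynomial (Fin 4) ℂ) ^ (i 1).val) ^ 5 = 1 := by
      rw [← pow_mul]; exact mk _ (by push_cast; simp only [hv]; linear_combination i 1 * h5)
    have H2 : ((C ξ : MvPolynomial (Fin 4) ℂ) ^ (i 2).val) ^ 5 = 1 := by
      rw [← pow_mul]; exact mk _ (by push_cast; simp only [hv]; linear_combination i 2 * h5)
    have H3 : ((C ξ : MvPolynomial (Fin 4) ℂ) ^ (i 3).val) ^ 5 = 1 := by
      rw [← pow_mul]; exact mk _ (by push_cast; simp only [hv]; linear_combination i 3 * h5)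
    have Hb1 : (C ξ : MvPolynomial (Fin 4) ℂ) ^ (i 1).val * ((C ξ) ^ (i 2).val) ^ 3 * (C ξ) ^ (i 3).val = 1 := by
      rw [← pow_mul, ← pow_add, ← pow_add]
      exact mk _ (by push_cast; simp only [hv]; linear_combination 3 * h2c + h3c + 2 * i 1 * h5)
    have Hb2 : (C ξ : MvPolynomial (Fin 4) ℂ) ^ (i 2).val * (C ξ) ^ (i 3).val = 1 := by
      rw [← pow_add]
      exact mk _ (by push_cast; simp only [hv]; linear_combination h2c + h3c + i 1 * h5)
    have Hb3 : (C ξ : MvPolynomial (Fin 4) ℂ) ^ (i 1).val * ((C ξ) ^ (i 3).val) ^ 3 = 1 := by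
      rw [← pow_mul, ← pow_add]
      exact mk _ (by push_cast; simp only [hv]; linear_combination 3 * h3c + 2 * i 1 * h5)
    have Hb4 : ((C ξ : MvPolynomial (Fin 4) ℂ) ^ (i 1).val) ^ 3 * (C ξ) ^ (i 2).val = 1 := by
      rw [← pow_mul, ← pow_add]
      exact mk _ (by push_cast; simp only [hv]; linear_combination h2c + i 1 * h5)
    have Hc1 : ((C ξ : MvPolynomial (Fin 4) ℂ) ^ (i 1).val) ^ 2 * (C ξ) ^ (i 2).val * ((C ξ) ^ (i 3).val) ^ 2 = 1 := by
      rw [← pow_mul, ← pow_mul, ← pow_add, ← pow_add]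
      exact mk _ (by push_cast; simp only [hv]; linear_combination h2c + 2 * h3c + 2 * i 1 * h5)
    have Hc2 : ((C ξ : MvPolynomial (Fin 4) ℂ) ^ (i 2).val) ^ 2 * ((C ξ) ^ (i 3).val) ^ 2 = 1 := by
      rw [← pow_mul, ← pow_mul, ← pow_add]
      exact mk _ (by push_cast; simp only [hv]; linear_combination 2 * h2c + 2 * h3c + 2 * i 1 * h5)
    have Hc3 : ((C ξ : MvPolynomial (Fin 4) ℂ) ^ (i 1).val) ^ 2 * (C ξ) ^ (i 3).val = 1 := by
      rw [← pow_mul, ← pow_add]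
      exact mk _ (by push_cast; simp only [hv]; linear_combination h3c + i 1 * h5)
    have Hc4 : (C ξ : MvPolynomial (Fin 4) ℂ) ^ (i 1).val * ((C ξ) ^ (i 2).val) ^ 2 = 1 := by
      rw [← pow_mul, ← pow_add]
      exact mk _ (by push_cast; simp only [hv]; linear_combination 2 * h2c + i 1 * h5)
    rw [hq₀]
    simp only [map_add, map_mul, map_pow, aeval_X, aeval_C, algebraMap_eq, mul_pow,
      hi₁, ZMod.val_zero, pow_zero, one_pow, one_mul]
    linear_combination (X 1 ^ 5 : MvPolynomial (Fin 4) ℂ) * H1 + X 2 ^ 5 * H2 + X 3 ^ 5 * H3 +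
      C b₁ * (X 1 * X 2 ^ 3 * X 3) * Hb1 + C b₂ * (X 0 ^ 3 * X 2 * X 3) * Hb2 +
      C b₃ * (X 0 * X 1 * X 3 ^ 3) * Hb3 + C b₄ * (X 0 * X 1 ^ 3 * X 2) * Hb4 +
      C c₁ * (X 1 ^ 2 * X 2 * X 3 ^ 2) * Hc1 + C c₂ * (X 0 * X 2 ^ 2 * X 3 ^ 2) * Hc2 +
      C c₃ * (X 0 ^ 2 * X 1 ^ 2 * X 3) * Hc3 + C c₄ * (X 0 ^ 2 * X 1 * X 2 ^ 2) * Hc4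
end

section
/- Let X̄ ⊂ P³ be a quintic hypersurface with at most rational double points, invariant under the Z/5-action ρ = diag(ξ,ξ²,ξ³,ξ⁴), acting freely on X̄, and suppose Hom(Ω_{X̄}, O_{X̄}) = 0 and H¹(X̄, T_{P³}|_{X̄}) = 0. Then from the exact sequence 0 → H⁰(X̄, T_{P³}|_{X̄}) → H⁰(X̄, O_{X̄}(5)) → Ext¹(Ω_{X̄}, O_{X̄}) → 0 and the dimensions dim H⁰(X̄, T_{P³}|_{X̄})^{Z/5} = 3 and dim H⁰(X̄, O_{X̄}(5))^{Z/5} = 11, the Z/5-invariant part of Ext¹(Ω_{X̄}, O_{X̄}) has dimension 8. -/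
/-- Dimension count of the `Z/5`-invariant part of `Ext¹(Ω_{X̄}, O_{X̄})` for the
canonical cover `X̄ ⊆ P³` of a torsion-5 Godeaux surface.  We formalize the exact
sequence `0 → H⁰(X̄, T_{P³}|_{X̄}) → H⁰(X̄, O_{X̄}(5)) → Ext¹(Ω_{X̄}, O_{X̄}) → 0`
(coming from `Hom(Ω_{X̄}, O_{X̄}) = 0` and `H¹(X̄, T_{P³}|_{X̄}) = 0`) as a
`Z/5`-equivariant short exact sequence of finite-dimensional ℂ-vector spaces; the
invariant parts of the first two have dimensions 3 and 11, hence the invariant part of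
`Ext¹(Ω_{X̄}, O_{X̄})` has dimension `11 − 3 = 8`. -/
theorem stmt_11
    (H0T H0O5 Ext1 : Type*)
    [AddCommGroup H0T] [Module ℂ H0T] [FiniteDimensional ℂ H0T]
    [AddCommGroup H0O5] [Module ℂ H0O5] [FiniteDimensional ℂ H0O5]
    [AddCommGroup Ext1] [Module ℂ Ext1] [FiniteDimensional ℂ Ext1]
    (ρ₁ : Representation ℂ (Multiplicative (ZMod 5)) H0T)
    (ρ₂ : Representation ℂ (Multiplicative (ZMod 5)) H0O5)
    (ρ₃ : Representation ℂ (Multiplicative (ZMod 5)) Ext1)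
    (f : H0T →ₗ[ℂ] H0O5) (g : H0O5 →ₗ[ℂ] Ext1)
    (hf : Function.Injective f) (hg : Function.Surjective g)
    (hfg : Function.Exact f g)
    (hfequiv : ∀ (x : Multiplicative (ZMod 5)) (v : H0T), f (ρ₁ x v) = ρ₂ x (f v))
    (hgequiv : ∀ (x : Multiplicative (ZMod 5)) (v : H0O5), g (ρ₂ x v) = ρ₃ x (g v))
    (h1 : Module.finrank ℂ ρ₁.invariants = 3)
    (h2 : Module.finrank ℂ ρ₂.invariants = 11) :
    Module.finrank ℂ ρ₃.invariants = 8 := by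
  haveI : Invertible ((Fintype.card (Multiplicative (ZMod 5)) : ℂ)) := by
    apply invertibleOfNonzero
    simp only [Fintype.card_multiplicative, ZMod.card]
    norm_num
  -- restricted maps between invariants
  have hfmem : ∀ u ∈ ρ₁.invariants, f u ∈ ρ₂.invariants := by
    intro u hu x
    rw [← hfequiv, hu x]
  have hgmem : ∀ v ∈ ρ₂.invariants, g v ∈ ρ₃.invariants := by
    intro v hv x
    rw [← hgequiv, hv x]
  set f' : ρ₁.invariants →ₗ[ℂ] ρ₂.invariants := f.restrict hfmem with hf'def
  set g' : ρ₂.invariants →ₗ[ℂ] ρ₃.invariants := g.restrict hgmem with hg'def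
  have hf' : Function.Injective f' := by
    intro a b hab
    apply Subtype.ext
    exact hf (congrArg Subtype.val hab)
  -- averaging commutes with g
  have havg : ∀ v : H0O5, g (ρ₂.averageMap v) = ρ₃.averageMap (g v) := by
    intro v
    simp only [Representation.averageMap, GroupAlgebra.average, map_smul, map_sum,
      MonoidAlgebra.of_apply, Representation.asAlgebraHom_single, one_smul,
      LinearMap.smul_apply, LinearMap.sum_apply, hgequiv]
  have hg' : Function.Surjective g' := by
    rintro ⟨w, hw⟩
    obtain ⟨v, hv⟩ := hg w
    refine ⟨⟨ρ₂.averageMap v, ρ₂.averageMap_invariant v⟩, ?_⟩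
    apply Subtype.ext
    show g (ρ₂.averageMap v) = w
    rw [havg, hv, ρ₃.averageMap_id w hw]
  -- kernel of g' = range of f'
  have hker : LinearMap.ker g' = LinearMap.range f' := by
    ext ⟨v, hv⟩
    constructor
    · intro h
      have hgv : g v = 0 := congrArg Subtype.val h
      obtain ⟨u, hu⟩ := (hfg v).mp hgv
      have huinv : u ∈ ρ₁.invariants := by
        intro x
        apply hf
        rw [hfequiv, hu, hv x, ← hu]
      exact ⟨⟨u, huinv⟩, Subtype.ext hu⟩
    · rintro ⟨⟨u, hu⟩, h⟩
      have hvu : v = f u := (congrArg Subtype.val h).symm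
      apply Subtype.ext
      show g v = 0
      rw [hvu]
      exact (hfg (f u)).mpr ⟨u, rfl⟩
  have hrank := LinearMap.finrank_range_add_finrank_ker g'
  rw [LinearMap.range_eq_top.mpr hg', hker, LinearMap.finrank_range_of_inj hf',
    finrank_top, h1, h2] at hrank
  omega
end

section
/- Consider the affine surface in ℂ⁴ with coordinates (x₂, x₃, y₁, y₃) defined by q₀ = 1 + x₂⁴ + x₃⁴ + a·x₃² + y₁y₃ = 0 and q₂ = d₁·x₂² + y₁² + y₃² = 0, with d₁ ≠ 0 and d₁² ≠ 16. Then for a = 0 the singular points (where the 2×4 Jacobian of (q₀, q₂) has rank < 2 and both equations hold) are exactly the four points (0, ζ, 0, 0) with ζ⁴ = −1. -/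
/-- Singular points of the affine chart `x₁ = 1` (with `a = 0`) of the double cover of a
torsion-4 Godeaux surface in the stratum `T₂`: with `q₀ = 1 + x₂⁴ + x₃⁴ + y₁y₃`,
`q₂ = d₁x₂² + y₁² + y₃²`, `d₁ ≠ 0`, `d₁² ≠ 16`, a point is singular (both equations hold
and all 2×2 minors of the Jacobian `J = ((4x₂³, 4x₃³, y₃, y₁), (2d₁x₂, 0, 2y₁, 2y₃))`
vanish) iff `x₂ = 0`, `y₁ = 0`, `y₃ = 0` and `x₃⁴ = −1` (four points). -/
theorem stmt_12 (d₁ x₂ x₃ y₁ y₃ : ℂ) (hd : d₁ ≠ 0) (hd16 : d₁ ^ 2 ≠ 16) :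
    ((1 + x₂ ^ 4 + x₃ ^ 4 + y₁ * y₃ = 0 ∧ d₁ * x₂ ^ 2 + y₁ ^ 2 + y₃ ^ 2 = 0) ∧
      (4 * x₂ ^ 3 * 0 - 4 * x₃ ^ 3 * (2 * d₁ * x₂) = 0 ∧
       4 * x₂ ^ 3 * (2 * y₁) - y₃ * (2 * d₁ * x₂) = 0 ∧
       4 * x₂ ^ 3 * (2 * y₃) - y₁ * (2 * d₁ * x₂) = 0 ∧
       4 * x₃ ^ 3 * (2 * y₁) - y₃ * 0 = 0 ∧
       4 * x₃ ^ 3 * (2 * y₃) - y₁ * 0 = 0 ∧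
       y₃ * (2 * y₃) - y₁ * (2 * y₁) = 0))
    ↔ (x₂ = 0 ∧ y₁ = 0 ∧ y₃ = 0 ∧ x₃ ^ 4 = -1) := by
  constructor
  · rintro ⟨⟨hq0, hq2⟩, h1, h2, h3, h4, h5, h6⟩
    by_cases hx3 : x₃ = 0
    · -- contradiction case
      exfalso
      subst hx3
      by_cases hx2 : x₂ = 0
      · subst hx2
        have hy1 : y₁ = 0 := by
          have : y₁ ^ 2 = 0 := by linear_combination hq2 / 2 - h6 / 4
          exact pow_eq_zero_iff (n := 2) (by norm_num) |>.mp this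
        have hy3 : y₃ = 0 := by
          have : y₃ ^ 2 = 0 := by linear_combination hq2 / 2 + h6 / 4
          exact pow_eq_zero_iff (n := 2) (by norm_num) |>.mp this
        subst hy1; subst hy3
        simp at hq0
      · have e2 : 4 * x₂ ^ 2 * y₁ - d₁ * y₃ = 0 := by
          have : x₂ * (4 * x₂ ^ 2 * y₁ - d₁ * y₃) = 0 := by linear_combination h2 / 2
          rcases mul_eq_zero.mp this with h | h
          · exact absurd h hx2
          · exact h
        have e3 : 4 * x₂ ^ 2 * y₃ - d₁ * y₁ = 0 := by
          have : x₂ * (4 * x₂ ^ 2 * y₃ - d₁ * y₁) = 0 := by linear_combination h3 / 2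
          rcases mul_eq_zero.mp this with h | h
          · exact absurd h hx2
          · exact h
        have key : y₁ * (16 * x₂ ^ 4 - d₁ ^ 2) = 0 := by
          linear_combination 4 * x₂ ^ 2 * e2 + d₁ * e3
        rcases mul_eq_zero.mp key with hy1 | hq
        · have hy3 : y₃ = 0 := by
            have : d₁ * y₃ = 0 := by linear_combination hy1 * (4 * x₂ ^ 2) - e2
            exact (mul_eq_zero.mp this).resolve_left hd
          apply mul_ne_zero hd (pow_ne_zero 2 hx2)
          linear_combination hq2 - y₁ * hy1 - y₃ * hy3
        · -- 16 x₂⁴ = d₁², derive d₁² = 16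
          have hx2sq : x₂ ^ 2 ≠ 0 := pow_ne_zero 2 hx2
          have key2 : x₂ ^ 2 * (8 * y₁ * y₃ + d₁ ^ 2) = 0 := by
            linear_combination 2 * y₃ * e2 + d₁ * hq2 + d₁ * h6 / 2
          have hyy : 8 * y₁ * y₃ + d₁ ^ 2 = 0 :=
            (mul_eq_zero.mp key2).resolve_left hx2sq
          apply hd16
          -- hq : 16 x₂⁴ - d₁² = 0, hq0 : 1 + x₂⁴ + y₁y₃ = 0
          linear_combination -16 * hq0 + hq + 2 * hyy
    · -- x₃ ≠ 0 : the genuine singular points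
      have hx3c : x₃ ^ 3 ≠ 0 := pow_ne_zero 3 hx3
      have hy1 : y₁ = 0 := by
        have : x₃ ^ 3 * y₁ = 0 := by linear_combination h4 / 8
        exact (mul_eq_zero.mp this).resolve_left hx3c
      have hy3 : y₃ = 0 := by
        have : x₃ ^ 3 * y₃ = 0 := by linear_combination h5 / 8
        exact (mul_eq_zero.mp this).resolve_left hx3c
      have hx2 : x₂ = 0 := by
        have : d₁ * x₃ ^ 3 * x₂ = 0 := by linear_combination -h1 / 8
        rcases mul_eq_zero.mp this with h | h
        · exact absurd h (mul_ne_zero hd hx3c)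
        · exact h
      refine ⟨hx2, hy1, hy3, ?_⟩
      subst hx2; subst hy1; subst hy3
      linear_combination hq0
  · rintro ⟨h1, h2, h3, h4⟩
    subst h1; subst h2; subst h3
    refine ⟨⟨by linear_combination h4, by ring⟩, by ring, by ring, by ring, by ring, by ring, by ring⟩
end

section
/- Let ξ be a primitive 4th root of unity and consider the polynomials q₀ = x₁⁴+x₂⁴+x₃⁴+a x₁²x₃²+a′x₁x₂²x₃+y₁y₃+b₁y₁x₁x₂+b₃y₃x₂x₃ and q₂ = c₁x₁³x₃+c₃x₁x₃³+d₁x₁²x₂²+d₃x₂²x₃²+y₁²+y₃² in the weighted graded ring ℂ[x₁,x₂,x₃,y₁,y₃] with deg x_i = 1, deg y_i = 2. If a substitution x₁ ↦ λ₁x₁, x₂ ↦ x₂, x₃ ↦ λ₃x₃, y₁ ↦ μ₁y₁, y₃ ↦ μ₃y₃ sends q₀ to q₀ and q₂ to q₂ (all coefficients a,a′,b₁,b₃,c₁,c₃,d₁,d₃ nonzero), then λ₁, λ₃, μ₁, μ₃ are 4th roots of unity and μ₃ = μ₁⁻¹. -/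
open MvPolynomial

/-- Torsion-4 case: variables `X 0, X 1, X 2, X 3, X 4` stand for `x₁, x₂, x₃, y₁, y₃`
(weights 1,1,1,2,2).  If the substitution `x₁ ↦ λ₁x₁, x₂ ↦ x₂, x₃ ↦ λ₃x₃, y₁ ↦ μ₁y₁,
y₃ ↦ μ₃y₃` sends `q₀` to `q₀` and `q₂` to `q₂`, all coefficients being nonzero, then
`λ₁, λ₃, μ₁, μ₃` are 4th roots of unity and `μ₃ = μ₁⁻¹`. -/
theorem stmt_13 (a a' b₁ b₃ c₁ c₃ d₁ d₃ : ℂ)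
    (ha : a ≠ 0) (ha' : a' ≠ 0) (hb₁ : b₁ ≠ 0) (hb₃ : b₃ ≠ 0)
    (hc₁ : c₁ ≠ 0) (hc₃ : c₃ ≠ 0) (hd₁ : d₁ ≠ 0) (hd₃ : d₃ ≠ 0)
    (lam₁ lam₃ mu₁ mu₃ : ℂ)
    (q₀ q₂ : MvPolynomial (Fin 5) ℂ)
    (hq₀ : q₀ = X 0 ^ 4 + X 1 ^ 4 + X 2 ^ 4 + C a * (X 0 ^ 2 * X 2 ^ 2) +
      C a' * (X 0 * X 1 ^ 2 * X 2) + X 3 * X 4 +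
      C b₁ * (X 3 * X 0 * X 1) + C b₃ * (X 4 * X 1 * X 2))
    (hq₂ : q₂ = C c₁ * (X 0 ^ 3 * X 2) + C c₃ * (X 0 * X 2 ^ 3) +
      C d₁ * (X 0 ^ 2 * X 1 ^ 2) + C d₃ * (X 1 ^ 2 * X 2 ^ 2) + X 3 ^ 2 + X 4 ^ 2)
    (hpres₀ : aeval ![C lam₁ * X 0, X 1, C lam₃ * X 2, C mu₁ * X 3, C mu₃ * X 4] q₀ = q₀)
    (hpres₂ : aeval ![C lam₁ * X 0, X 1, C lam₃ * X 2, C mu₁ * X 3, C mu₃ * X 4] q₂ = q₂) :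
    lam₁ ^ 4 = 1 ∧ lam₃ ^ 4 = 1 ∧ mu₁ ^ 4 = 1 ∧ mu₃ ^ 4 = 1 ∧ mu₃ = mu₁⁻¹ := by
  have h1 := congrArg (eval ![(1:ℂ),0,0,0,0]) hpres₀
  simp [hq₀] at h1
  have h3 := congrArg (eval ![(0:ℂ),0,1,0,0]) hpres₀
  simp [hq₀] at h3
  have h13 := congrArg (eval ![(0:ℂ),0,0,1,1]) hpres₀
  simp [hq₀] at h13
  have hm1 := congrArg (eval ![(1:ℂ),1,0,1,0]) hpres₀
  simp [hq₀] at hm1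
  -- hm1 : lam₁^4 + 1 + b₁*(mu₁*lam₁) = 1 + 1 + b₁ (roughly)
  have hmu1 : lam₁ * mu₁ = 1 := by
    have : b₁ * (lam₁ * mu₁) = b₁ * 1 := by linear_combination hm1 - h1
    exact mul_left_cancel₀ hb₁ this
  have hmu14 : mu₁ ^ 4 = 1 := by
    have : (lam₁ * mu₁) ^ 4 = 1 := by rw [hmu1]; ring
    calc mu₁ ^ 4 = mu₁ ^ 4 * lam₁ ^ 4 := by rw [h1]; ring
      _ = (lam₁ * mu₁) ^ 4 := by ring
      _ = 1 := this
  have hmu3 : mu₃ = mu₁⁻¹ := by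
    have hmu₁ne : mu₁ ≠ 0 := by
      intro h; rw [h] at hmu14; simp at hmu14
    field_simp
    linear_combination h13
  have hmu34 : mu₃ ^ 4 = 1 := by
    rw [hmu3, inv_pow, hmu14]; norm_num
  exact ⟨h1, h3, hmu14, hmu34, hmu3⟩
end

section
/- Let ξ = exp(2πi/5). Under the substitution corresponding to the permutation 'multiplication by 4', x_s ↦ ξ^{i_s} x_{4s mod 5}, the quintic q₀ of the torsion-5 Godeaux cover with all coefficients b₁,…,c₄ nonzero is preserved only if b₁/b₄, b₃/b₂, c₁/c₄, c₃/c₂ are all 5th roots of unity satisfying: if b₁ = b₄ξⁿ then b₃ = b₂ξ^{2n}, c₁ = c₄ξ^{2n}, c₃ = c₂ξ^{4n}. -/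
open MvPolynomial Complex

private lemma swapC (a : ℂ) (n : ℕ) (p : Polynomial ℂ) :
    Polynomial.X ^ n * (Polynomial.C a * p) = Polynomial.C a * (Polynomial.X ^ n * p) := by ring
private lemma swapC' (a : ℂ) (n : ℕ) :
    (Polynomial.X : Polynomial ℂ) ^ n * Polynomial.C a = Polynomial.C a * Polynomial.X ^ n := by ring
private lemma swapC'' (a : ℂ) (n : ℕ) :
    (Polynomial.X : Polynomial ℂ) ^ n * (Polynomial.C a * Polynomial.X) = Polynomial.C a * Polynomial.X ^ (n+1) := by ring
private lemma pullX (n m : ℕ) (p : Polynomial ℂ) :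
    Polynomial.X ^ n * (Polynomial.X ^ m * p) = Polynomial.X ^ (n + m) * p := by ring
private lemma pullX' (n : ℕ) (p : Polynomial ℂ) :
    Polynomial.X ^ n * (Polynomial.X * p) = Polynomial.X ^ (n + 1) * p := by ring
private lemma mulX (n : ℕ) : (Polynomial.X : Polynomial ℂ) ^ n * Polynomial.X = Polynomial.X ^ (n+1) := by ring


/-- Let `ξ = exp(2πi/5)`.  The substitution corresponding to the permutation
"multiplication by 4", i.e. `x_s ↦ ξ^{i_s} x_{4s mod 5}` (with `i₁ = 0`; in 0-indexed
coordinates `X s ↦ ξ^{i_s} X (s.rev)`), preserves the generic torsion-5 Godeaux quintic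
`q₀` with all coefficients nonzero only if there is an `n ∈ ZMod 5` with
`b₁ = b₄ξⁿ`, `b₃ = b₂ξ^{2n}`, `c₁ = c₄ξ^{2n}`, `c₃ = c₂ξ^{4n}`. -/
theorem stmt_19 (ξ : ℂ) (hξ : ξ = Complex.exp (2 * Real.pi * Complex.I / 5))
    (b₁ b₂ b₃ b₄ c₁ c₂ c₃ c₄ : ℂ)
    (hb₁ : b₁ ≠ 0) (hb₂ : b₂ ≠ 0) (hb₃ : b₃ ≠ 0) (hb₄ : b₄ ≠ 0)
    (hc₁ : c₁ ≠ 0) (hc₂ : c₂ ≠ 0) (hc₃ : c₃ ≠ 0) (hc₄ : c₄ ≠ 0)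
    (i : Fin 4 → ZMod 5) (hi₁ : i 0 = 0)
    (q₀ : MvPolynomial (Fin 4) ℂ)
    (hq₀ : q₀ = X 0 ^ 5 + X 1 ^ 5 + X 2 ^ 5 + X 3 ^ 5 +
      C b₁ * (X 1 * X 2 ^ 3 * X 3) + C b₂ * (X 0 ^ 3 * X 2 * X 3) +
      C b₃ * (X 0 * X 1 * X 3 ^ 3) + C b₄ * (X 0 * X 1 ^ 3 * X 2) +
      C c₁ * (X 1 ^ 2 * X 2 * X 3 ^ 2) + C c₂ * (X 0 * X 2 ^ 2 * X 3 ^ 2) +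
      C c₃ * (X 0 ^ 2 * X 1 ^ 2 * X 3) + C c₄ * (X 0 ^ 2 * X 1 * X 2 ^ 2))
    (hpres : aeval (fun s : Fin 4 => C (ξ ^ (i s).val) * X s.rev) q₀ = q₀) :
    ∃ n : ZMod 5,
      b₁ = b₄ * ξ ^ n.val ∧ b₃ = b₂ * ξ ^ (2 * n).val ∧
      c₁ = c₄ * ξ ^ (2 * n).val ∧ c₃ = c₂ * ξ ^ (4 * n).val := by
  have prim : IsPrimitiveRoot ξ 5 := by
    rw [hξ]; exact Complex.isPrimitiveRoot_exp 5 (by norm_num)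
  -- transfer to univariate polynomials via weights 1, 10, 100, 1000
  have H := congrArg (aeval (R := ℂ) (fun s : Fin 4 => (Polynomial.X : Polynomial ℂ) ^ (10 ^ (s : ℕ)))) hpres
  rw [hq₀] at H
  simp only [map_add, map_mul, map_pow, aeval_X, aeval_C,
    show (0:Fin 4).rev = 3 from rfl, show (1:Fin 4).rev = 2 from rfl,
    show (2:Fin 4).rev = 1 from rfl, show (3:Fin 4).rev = 0 from rfl,
    show ((0:Fin 4):ℕ) = 0 from rfl, show ((1:Fin 4):ℕ) = 1 from rfl,
    show ((2:Fin 4):ℕ) = 2 from rfl, show ((3:Fin 4):ℕ) = 3 from rfl] at H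
  norm_num at H
  have key : ∀ a b : ℕ, ((a : ZMod 5) = (b : ZMod 5)) → ξ ^ a = ξ ^ b := by
    intro a b hab
    have h := (ZMod.natCast_eq_natCast_iff a b 5).1 hab
    have h5 : ξ ^ 5 = 1 := prim.pow_eq_one
    have hmod : ∀ c : ℕ, ξ ^ c = ξ ^ (c % 5) := by
      intro c
      conv_lhs => rw [← Nat.mod_add_div c 5]
      rw [pow_add, pow_mul, h5, one_pow, mul_one]
    rw [hmod a, hmod b, show a % 5 = b % 5 from h]
  have hval : ∀ s : Fin 4, (((i s).val : ℕ) : ZMod 5) = i s := by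
    intro s; simp [ZMod.natCast_val, ZMod.cast_id]
  -- coefficient extractions
  have E1 := congrArg (fun p => Polynomial.coeff p 1310) H
  have E2 := congrArg (fun p => Polynomial.coeff p 3011) H
  have E3 := congrArg (fun p => Polynomial.coeff p 1103) H
  have E4 := congrArg (fun p => Polynomial.coeff p 2120) H
  have E5 := congrArg (fun p => Polynomial.coeff p 1022) H
  simp only [Polynomial.coeff_add, mul_pow, ← Polynomial.C_pow, ← pow_mul, mul_assoc,
    swapC, swapC', swapC'', pullX, pullX', mulX, ← pow_add,
    Polynomial.coeff_C_mul, Polynomial.coeff_X_pow] at E1 E2 E3 E4 E5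
  norm_num at E1 E2 E3 E4 E5
  -- relation i 3 = i 1 + i 2
  set v : Fin 4 → ℕ := fun s => (i s).val with hv
  have hrel : i 3 = i 1 + i 2 := by
    have h23 : b₂ * (ξ ^ ((i 0).val * 3 + ((i 2).val + (i 3).val)) *
        ξ ^ ((i 0).val + ((i 1).val + (i 3).val * 3))) = b₂ := by
      rw [pow_add, pow_add, pow_add, pow_add]
      calc b₂ * (ξ ^ ((i 0).val * 3) * (ξ ^ (i 2).val * ξ ^ (i 3).val) *
            (ξ ^ (i 0).val * (ξ ^ (i 1).val * ξ ^ ((i 3).val * 3))))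
          = (b₂ * (ξ ^ ((i 0).val * 3) * (ξ ^ (i 2).val * ξ ^ (i 3).val))) *
            (ξ ^ (i 0).val * (ξ ^ (i 1).val * ξ ^ ((i 3).val * 3))) := by ring
        _ = b₃ * (ξ ^ (i 0).val * (ξ ^ (i 1).val * ξ ^ ((i 3).val * 3))) := by rw [E2]
        _ = b₂ := E3
    have hpow : ξ ^ ((i 0).val * 3 + ((i 2).val + (i 3).val)) *
        ξ ^ ((i 0).val + ((i 1).val + (i 3).val * 3)) = 1 := by
      exact mul_left_cancel₀ hb₂ (h23.trans (mul_one b₂).symm)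
    rw [← pow_add] at hpow
    have hdvd : (5 : ℕ) ∣ ((i 0).val * 3 + ((i 2).val + (i 3).val) +
        ((i 0).val + ((i 1).val + (i 3).val * 3))) := prim.pow_eq_one_iff_dvd _ |>.1 hpow
    have hz : ((((i 0).val * 3 + ((i 2).val + (i 3).val) +
        ((i 0).val + ((i 1).val + (i 3).val * 3))) : ℕ) : ZMod 5) = 0 := by
      exact_mod_cast (ZMod.natCast_eq_zero_iff _ 5).2 hdvd
    push_cast at hz
    rw [hval 0, hval 1, hval 2, hval 3, hi₁] at hz
    have h5 : (5 : ZMod 5) = 0 := by decide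
    linear_combination (4 : ZMod 5) * hz - (i 1 + i 2 + 3 * i 3) * h5
  have h50 : (5:ZMod 5) = 0 := by decide
  refine ⟨3 * i 1 + i 2, ?_, ?_, ?_, ?_⟩
  · rw [← E1]
    refine congrArg (HMul.hMul _) ?_
    rw [← pow_add, ← pow_add]
    refine (key _ _ ?_).symm
    push_cast
    rw [hval 0, hval 1, hval 2, hi₁, ZMod.natCast_val, ZMod.cast_id]
    ring
  · rw [← E2]
    refine congrArg (HMul.hMul _) ?_
    rw [← pow_add, ← pow_add]
    refine (key _ _ ?_).symm
    push_cast
    rw [hval 0, hval 2, hval 3, hi₁, ZMod.natCast_val, ZMod.cast_id, hrel]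
    linear_combination (i 1) * h50
  · rw [← E4]
    refine congrArg (HMul.hMul _) ?_
    rw [← pow_add, ← pow_add]
    refine (key _ _ ?_).symm
    push_cast
    rw [hval 0, hval 1, hval 2, hi₁, ZMod.natCast_val, ZMod.cast_id]
    linear_combination (i 1) * h50
  · rw [← E5]
    refine congrArg (HMul.hMul _) ?_
    rw [← pow_add, ← pow_add]
    refine (key _ _ ?_).symm
    push_cast
    rw [hval 0, hval 2, hval 3, hi₁, ZMod.natCast_val, ZMod.cast_id, hrel]
    linear_combination (2 * i 1) * h50
end
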